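/- arXiv:1712.08211 — 2 statements merged into one kernel-verified Lean document; each statement's English description precedes it below -/
import Mathlib

section
/- Among all modifications of the outcome of the form Ŷ = T·(R + f(T)) with f : ℝ → ℝ measurable and T·(R + f(T)) square-integrable, the choice f(T) = −E[R|T] achieves the minimum possible variance; that is, for every such f one has Var[T·(R − E[R|T])] ≤ Var[T·(R + f(T))], and the minimal value satisfies Var[T·(R − E[R|T])] = E[T²·(R − E[R|T])²]. -/
open MeasureTheory ProbabilityTheory

/-- Variance as defined in the context: `Var[Z] = E[Z²] − (E[Z])²`. -/
noncomputable def Var {Ω : Type*} [MeasureSpace Ω] (Z : Ω → ℝ) : ℝ :=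
  (∫ ω, (Z ω) ^ 2) - (∫ ω, Z ω) ^ 2

/-!
Write `X = T·(R − E[R|T])`. Any competitor splits as `T·(R + f(T)) = X + W` with
`W = T·(E[R|T] + f(T))` measurable with respect to `σ(T)`. The residual `R − E[R|T]` is orthogonal
to every `σ(T)`-measurable square-integrable function, so `E[X] = 0` (take `T`) and
`E[X·W] = 0` (take `T·W`). Hence `X` and `W` are uncorrelated, `Var(X + W) = Var X + Var W ≥ Var X`,
and `Var X = E[X²]`.
-/

lemma integral_mul_sub_condExp_eq_zero {Ω : Type*} {m m₀ : MeasurableSpace Ω} {μ : Measure Ω}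
    [IsFiniteMeasure μ] (hm : m ≤ m₀) {f g : Ω → ℝ} (hg : StronglyMeasurable[m] g)
    (hg2 : MemLp g 2 μ) (hf : MemLp f 2 μ) :
    ∫ ω, g ω * (f ω - μ[f|m] ω) ∂μ = 0 := by
  have hf1 : Integrable f μ := hf.integrable one_le_two
  have hres : MemLp (f - μ[f|m]) 2 μ := hf.sub (hf.condExp one_le_two)
  have hres_zero : μ[f - μ[f|m]|m] =ᵐ[μ] 0 := by
    filter_upwards [condExp_sub hf1 integrable_condExp m] with ω hω
    rw [hω, condExp_of_stronglyMeasurable hm stronglyMeasurable_condExp integrable_condExp,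
      sub_self]
  calc ∫ ω, g ω * (f ω - μ[f|m] ω) ∂μ
      = ∫ ω, μ[g * (f - μ[f|m])|m] ω ∂μ := (integral_condExp hm).symm
    _ = ∫ ω, (g * μ[f - μ[f|m]|m]) ω ∂μ := integral_congr_ae
        (condExp_mul_of_stronglyMeasurable_left hg (hg2.integrable_mul hres)
          (hres.integrable one_le_two))
    _ = ∫ _, (0 : ℝ) ∂μ := integral_congr_ae (hres_zero.mono fun ω hω => by simp [hω])
    _ = 0 := integral_zero _ _

lemma Var_eq_variance {Ω : Type*} [MeasureSpace Ω] [IsProbabilityMeasure (ℙ : Measure Ω)]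
    {Z : Ω → ℝ} (hZ : MemLp Z 2 ℙ) : Var Z = variance Z ℙ := by
  rw [variance_eq_sub hZ, Var]
  rfl

lemma Var_le_Var_add_of_covariance_eq_zero {Ω : Type*} [MeasureSpace Ω]
    [IsProbabilityMeasure (ℙ : Measure Ω)] {X W : Ω → ℝ} (hX : MemLp X 2 ℙ) (hW : MemLp W 2 ℙ)
    (hXW : cov[X, W; ℙ] = 0) :
    Var X ≤ Var (X + W) := by
  rw [Var_eq_variance hX, Var_eq_variance (hX.add hW), variance_add hX hW, hXW]
  linarith [variance_nonneg W ℙ]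

lemma Var_eq_integral_sq_of_integral_eq_zero {Ω : Type*} [MeasureSpace Ω] {Z : Ω → ℝ}
    (hZ : ∫ ω, Z ω = 0) : Var Z = ∫ ω, Z ω ^ 2 := by
  rw [Var, hZ, zero_pow two_ne_zero, sub_zero]

/-- Among all modified outcomes `Ŷ = T·(R + f(T))` with `f` measurable and `Ŷ`
square-integrable, the choice `f(T) = −E[R|T]` achieves the minimal variance, and this
minimum equals `E[T²·(R − E[R|T])²]`. -/
theorem min_variance_of_per_treatment_centering
    {Ω : Type*} [MeasureSpace Ω] [IsProbabilityMeasure (ℙ : Measure Ω)]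
    (T R : Ω → ℝ) (hT : Measurable T) (hTbdd : ∃ C : ℝ, ∀ ω, |T ω| ≤ C)
    (hR : MemLp R 2 ℙ)
    (cE : Ω → ℝ) (hcE : cE = ℙ[R | MeasurableSpace.comap T inferInstance]) :
    (∀ f : ℝ → ℝ, Measurable f →
        MemLp (fun ω => T ω * (R ω + f (T ω))) 2 ℙ →
        Var (fun ω => T ω * (R ω - cE ω)) ≤ Var (fun ω => T ω * (R ω + f (T ω)))) ∧
      Var (fun ω => T ω * (R ω - cE ω)) = ∫ ω, (T ω) ^ 2 * (R ω - cE ω) ^ 2 := by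
  obtain ⟨C, hC⟩ := hTbdd
  set m : MeasurableSpace Ω := MeasurableSpace.comap T inferInstance
  have hTm : StronglyMeasurable[m] T := (comap_measurable T).stronglyMeasurable
  have hT_top : MemLp T ⊤ ℙ := memLp_top_of_bound hT.aestronglyMeasurable C (.of_forall hC)
  have orthogonal : ∀ g : Ω → ℝ, StronglyMeasurable[m] g → MemLp g 2 ℙ →
      ∫ ω, g ω * (R ω - cE ω) = 0 := fun g hg hg2 => by
    subst hcE; exact integral_mul_sub_condExp_eq_zero hT.comap_le hg hg2 hR
  set X : Ω → ℝ := fun ω => T ω * (R ω - cE ω)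
  have hX : MemLp X 2 ℙ := (hR.sub (hcE ▸ hR.condExp one_le_two)).mul' hT_top
  have hEX : ∫ ω, X ω = 0 := orthogonal T hTm (hT_top.mono_exponent le_top)
  refine ⟨fun f hf hY => ?_, ?_⟩
  · set W : Ω → ℝ := fun ω => T ω * (cE ω + f (T ω))
    have hXW : (fun ω => T ω * (R ω + f (T ω))) = X + W := by
      ext ω; simp only [X, W, Pi.add_apply]; ring
    have hW : MemLp W 2 ℙ := by simpa [hXW] using hY.sub hX
    have hWm : StronglyMeasurable[m] W := by
      have hcEm : StronglyMeasurable[m] cE := hcE ▸ stronglyMeasurable_condExp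
      exact hTm.mul (hcEm.add ((hf.comp (comap_measurable T)).stronglyMeasurable))
    have hEXW : ∫ ω, X ω * W ω = 0 := by
      rw [← orthogonal (fun ω => T ω * W ω) (hTm.mul hWm) (hW.mul' hT_top)]
      congr 1; ext ω; ring
    rw [hXW]
    refine Var_le_Var_add_of_covariance_eq_zero hX hW ?_
    rw [covariance_eq_sub hX hW, hEX]
    simpa using hEXW
  · simp_rw [Var_eq_integral_sq_of_integral_eq_zero hEX, X, mul_pow]
end

section
/- The centered modified outcome never has larger variance than the uncentered modified outcome: Var[T·(R − E[R|T])] ≤ Var[T·R]. -/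
open MeasureTheory ProbabilityTheory

/-! Since `T` is `σ(T)`-measurable it pulls out of the conditional expectation, so
`T·(R - 𝔼[R|T]) = T·R - 𝔼[T·R|T]`. Centering any `X ∈ L²` at its conditional expectation
leaves the expected conditional variance, and by the law of total variance
`Var[X - 𝔼[X|m]] = 𝔼[Var[X|m]] = Var[X] - Var[𝔼[X|m]] ≤ Var[X]`. -/

namespace ProbabilityTheory

variable {Ω : Type*} {m m₀ : MeasurableSpace Ω} {μ : Measure[m₀] Ω} {X T R : Ω → ℝ}

lemma variance_sub_condExp_eq_integral_condVar (hm : m ≤ m₀) [IsFiniteMeasure μ]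
    (hX : MemLp X 2 μ) : variance (X - μ[X|m]) μ = μ[condVar m X μ] := by
  have hmean : μ[X - μ[X|m]] = 0 := by
    rw [integral_sub' (hX.integrable one_le_two) integrable_condExp, integral_condExp hm, sub_self]
  rw [variance_eq_integral (hX.sub (hX.condExp one_le_two)).aemeasurable, hmean, condVar,
    integral_condExp hm]
  simp

lemma variance_sub_condExp_le (hm : m ≤ m₀) [IsProbabilityMeasure μ] (hX : MemLp X 2 μ) :
    variance (X - μ[X|m]) μ ≤ variance X μ := by
  rw [variance_sub_condExp_eq_integral_condVar hm hX,
    ← integral_condVar_add_variance_condExp hm hX]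
  exact le_add_of_nonneg_right (variance_nonneg _ _)

lemma mul_sub_condExp_ae_eq (hT : StronglyMeasurable[m] T) (hTR : Integrable (T * R) μ)
    (hR : Integrable R μ) : T * (R - μ[R|m]) =ᵐ[μ] T * R - μ[T * R|m] := by
  filter_upwards [condExp_mul_of_stronglyMeasurable_left hT hTR hR] with ω hω
  simp only [Pi.mul_apply, Pi.sub_apply, hω]
  ring

end ProbabilityTheory

/-- The centered modified outcome never has larger variance than the uncentered
modified outcome: `Var[T·(R − E[R|T])] ≤ Var[T·R]`. -/
theorem variance_centered_le_variance_uncentered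
    {Ω : Type*} [MeasureSpace Ω] [IsProbabilityMeasure (ℙ : Measure Ω)]
    (T R : Ω → ℝ) (hT : Measurable T) (hTbdd : ∃ C : ℝ, ∀ ω, |T ω| ≤ C)
    (hR : MemLp R 2 ℙ)
    (cE : Ω → ℝ) (hcE : cE = ℙ[R | MeasurableSpace.comap T inferInstance]) :
    Var (fun ω => T ω * (R ω - cE ω)) ≤ Var (fun ω => T ω * R ω) := by
  obtain ⟨C, hC⟩ := hTbdd
  have hTR : MemLp (T * R) 2 ℙ :=
    hR.mul (memLp_top_of_bound hT.aestronglyMeasurable C (.of_forall hC))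
  set m := MeasurableSpace.comap T inferInstance
  have hm : m ≤ MeasureSpace.toMeasurableSpace := hT.comap_le
  have hcentered : T * (R - cE) =ᵐ[ℙ] T * R - ℙ[T * R|m] := hcE ▸
    mul_sub_condExp_ae_eq (Measurable.of_comap_le le_rfl : Measurable[m] T).stronglyMeasurable
      (hTR.integrable one_le_two) (hR.integrable one_le_two)
  have hcenteredLp : MemLp (T * (R - cE)) 2 ℙ :=
    (hTR.sub (hTR.condExp one_le_two)).ae_eq hcentered.symm
  calc Var (T * (R - cE))
      = variance (T * R - ℙ[T * R|m]) ℙ := by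
        rw [Var_eq_variance hcenteredLp, variance_congr hcentered]
    _ ≤ variance (T * R) ℙ := variance_sub_condExp_le hm hTR
    _ = Var (T * R) := (Var_eq_variance hTR).symm
end
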